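/- Let α ≥ 1 be a real number and C > 0 a constant. For every pair of positive integers k, ℓ with k ≥ 4, there exists a positive integer N = N(k,ℓ,C,α) such that for all integers m, n with n ≥ N and n ≤ m ≤ C·n^α, rx_{k,ℓ}(K_{m,n}) = k + 1. -/

import Mathlib

open SimpleGraph

/-- `T` is a rainbow `S`-tree in `G` under edge-coloring `c`:
its vertices contain `S`, it is a tree, and `c` is injective on its edges. -/
def IsRainbowSTree {V β : Type*} (G : SimpleGraph V) (c : Sym2 V → β)
    (S : Set V) (T : G.Subgraph) : Prop :=
  S ⊆ T.verts ∧ T.coe.IsTree ∧ Set.InjOn c T.edgeSet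

/-- A family of `S`-trees is internally disjoint: pairwise edge-disjoint, and
the vertex sets of two distinct members meet exactly in `S`. -/
def InternallyDisjoint {V : Type*} {G : SimpleGraph V} (S : Set V)
    {ι : Type*} (T : ι → G.Subgraph) : Prop :=
  ∀ i j, i ≠ j → (T i).edgeSet ∩ (T j).edgeSet = ∅ ∧ (T i).verts ∩ (T j).verts = S

/-- The coloring `c` provides, for every set `S` of `k` vertices,
`ℓ` internally disjoint rainbow `S`-trees. -/
def HasRainbowSTrees {V β : Type*} (G : SimpleGraph V) (c : Sym2 V → β) (k ℓ : ℕ) : Prop :=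
  ∀ S : Finset V, S.card = k →
    ∃ T : Fin ℓ → G.Subgraph,
      (∀ i, IsRainbowSTree G c (S : Set V) (T i)) ∧ InternallyDisjoint (S : Set V) T

/-- The `(k,ℓ)`-rainbow index `rx_{k,ℓ}(G)`: the minimum number `t` of colors such that
some edge-coloring of `G` with `t` colors gives, for every `k`-set `S`,
`ℓ` internally disjoint rainbow `S`-trees. -/
noncomputable def rainbowIndex {V : Type*} (G : SimpleGraph V) (k ℓ : ℕ) : ℕ :=
  sInf {t : ℕ | ∃ c : Sym2 V → Fin t, HasRainbowSTrees G c k ℓ}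

/-!
Lower bound: a rainbow tree coloured from `k` colours has at most `k + 1` vertices. By pigeonhole
on the colour vectors seen from `k + 1` fixed left vertices, some left vertices `x₁ ≠ x₂` and
`k - 2` right vertices `Y` span a monochromatic `K_{2,k-2}`. A rainbow tree contains at most one
edge of it, and a short case analysis shows that a rainbow `S`-tree for `S = {x₁, x₂} ∪ Y` then
needs at least `k + 2` vertices.

Upper bound: split both sides into `ℓ` blocks of `q = n / ℓ` vertices and let the `i`-th tree be a
double star (a hub edge `x y` with every vertex of `S` pendant at the opposite hub) with its hubs
in the `i`-th block. Such a tree has `k + 1` edges, and the `q - k` candidates of a block whose hubs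
avoid `S` are edge-disjoint, so a uniformly random `(k + 1)`-colouring makes none of them rainbow
with probability at most `(1 - (k + 1) ^ (-(k + 1))) ^ (q - k)`. Since `m ≤ C n ^ α`, the number
`ℓ * choose (m + n) k` of pairs `(S, i)` grows only polynomially in `n`, so for large `n` some
colouring is good for all of them.
-/

open Finset Function Sum

namespace SimpleGraph.Subgraph

variable {V : Type*} {G : SimpleGraph V}

theorem natCard_coe_edgeSet (H : G.Subgraph) : Nat.card H.coe.edgeSet = H.edgeSet.ncard := by
  rw [← H.image_coe_edgeSet_coe, Set.ncard_image_of_injective _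
    (Sym2.map.injective Subtype.val_injective), Nat.card_coe_set_eq]

theorem coe_isTree_iff [Finite V] {H : G.Subgraph} :
    H.coe.IsTree ↔ H.coe.Connected ∧ H.edgeSet.ncard + 1 = H.verts.ncard := by
  rw [isTree_iff_connected_and_card, natCard_coe_edgeSet, Nat.card_coe_set_eq]

end SimpleGraph.Subgraph

theorem IsRainbowSTree.ncard_verts_le {V γ : Type*} [Finite V] [Fintype γ] {G : SimpleGraph V}
    {c : Sym2 V → γ} {S : Set V} {T : G.Subgraph} (hT : IsRainbowSTree G c S T) :
    T.verts.ncard ≤ Fintype.card γ + 1 := by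
  rw [← (Subgraph.coe_isTree_iff.1 hT.2.1).2, ← hT.2.2.ncard_image, ← Nat.card_eq_fintype_card]
  exact Nat.add_le_add_right (Set.ncard_le_card _) 1

theorem rainbowIndex_eq_of {V : Type*} {G : SimpleGraph V} {k ℓ t : ℕ}
    (h : ∃ c : Sym2 V → Fin t, HasRainbowSTrees G c k ℓ)
    (hlt : ∀ s < t, ∀ c : Sym2 V → Fin s, ¬ HasRainbowSTrees G c k ℓ) :
    rainbowIndex G k ℓ = t :=
  le_antisymm (Nat.sInf_le h) (le_csInf ⟨t, h⟩ fun s ⟨c, hc⟩ => not_lt.1 fun hs => hlt s hs c hc)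

section DoubleStar

variable {α β : Type*}

def cellEdge : α × β ↪ Sym2 (α ⊕ β) :=
  ⟨fun p => s(inl p.1, inr p.2), fun p q h => by simpa [Prod.ext_iff] using h⟩

theorem cellEdge_apply (p : α × β) : cellEdge p = s(inl p.1, inr p.2) := rfl

theorem cellEdge_mem_edgeSet (p : α × β) :
    cellEdge p ∈ (completeBipartiteGraph α β).edgeSet := by
  simp [cellEdge_apply]

variable [DecidableEq α] [DecidableEq β]

/-- The edges, as cells of `α × β`, of the double star with hub edge `x y`: every left vertex of
`S` is joined to `y` and every right vertex of `S` to `x`. -/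
def doubleStarCells (S : Finset (α ⊕ β)) (x : α) (y : β) : Finset (α × β) :=
  insert x S.toLeft ×ˢ {y} ∪ {x} ×ˢ S.toRight

theorem mem_doubleStarCells {S : Finset (α ⊕ β)} {x : α} {y : β} {p : α × β} :
    p ∈ doubleStarCells S x y ↔
      ((p.1 = x ∨ inl p.1 ∈ S) ∧ p.2 = y) ∨ (p.1 = x ∧ inr p.2 ∈ S) := by
  simp only [doubleStarCells, mem_union, mem_product, mem_insert, mem_singleton, mem_toLeft,
    mem_toRight]

theorem card_doubleStarCells {S : Finset (α ⊕ β)} {x : α} {y : β}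
    (hx : inl x ∉ S) (hy : inr y ∉ S) : #(doubleStarCells S x y) = #S + 1 := by
  rw [doubleStarCells, card_union_of_disjoint, card_product, card_product, card_singleton,
    card_singleton, card_insert_of_notMem (by simpa using hx), ← card_toLeft_add_card_toRight]
  · ring
  · rw [Finset.disjoint_left]
    rintro ⟨a, b⟩ h h'
    simp only [mem_product, mem_singleton, mem_toRight] at h h'
    exact hy (h.2 ▸ h'.2)

theorem disjoint_doubleStarCells {S : Finset (α ⊕ β)} {x x' : α} {y y' : β}
    (hx : inl x ∉ S) (hy : inr y ∉ S) (hxx' : x ≠ x') (hyy' : y ≠ y') :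
    Disjoint (doubleStarCells S x y) (doubleStarCells S x' y') := by
  rw [Finset.disjoint_left]
  rintro ⟨a, b⟩ h h'
  simp only [mem_doubleStarCells] at h h'
  grind

def doubleStar (S : Finset (α ⊕ β)) (x : α) (y : β) :
    (completeBipartiteGraph α β).Subgraph where
  verts := insert (inl x) (insert (inr y) ↑S)
  Adj u v := s(u, v) ∈ cellEdge '' ↑(doubleStarCells S x y)
  adj_sub := by
    rintro u v ⟨p, -, hp⟩
    rw [← mem_edgeSet, ← hp]
    exact cellEdge_mem_edgeSet p
  edge_vert := by
    rintro u v ⟨⟨a, b⟩, hp, huv⟩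
    rw [cellEdge_apply, Sym2.eq_iff] at huv
    rw [mem_coe, mem_doubleStarCells] at hp
    simp only [Set.mem_insert_iff, mem_coe]
    grind
  symm := ⟨fun _ _ h => by rwa [Sym2.eq_swap]⟩

theorem doubleStar_edgeSet (S : Finset (α ⊕ β)) (x : α) (y : β) :
    (doubleStar S x y).edgeSet = cellEdge '' ↑(doubleStarCells S x y) := by
  ext e
  induction e using Sym2.ind
  rfl

theorem doubleStar_adj_of_mem {S : Finset (α ⊕ β)} {x : α} {y : β} {p : α × β}
    (hp : p ∈ doubleStarCells S x y) : (doubleStar S x y).Adj (inl p.1) (inr p.2) :=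
  ⟨p, hp, rfl⟩

theorem doubleStar_connected (S : Finset (α ⊕ β)) (x : α) (y : β) :
    (doubleStar S x y).coe.Connected := by
  have reach {u v} (h : (doubleStar S x y).Adj u v) :
      (doubleStar S x y).coe.Reachable ⟨u, h.fst_mem⟩ ⟨v, h.snd_mem⟩ := Adj.reachable h
  have hub : (doubleStar S x y).Adj (inl x) (inr y) :=
    doubleStar_adj_of_mem (p := (x, y)) (mem_doubleStarCells.2 (.inl ⟨.inl rfl, rfl⟩))
  rw [connected_iff_exists_forall_reachable]
  refine ⟨⟨inl x, hub.fst_mem⟩, ?_⟩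
  rintro ⟨u, rfl | rfl | hu⟩
  · rfl
  · exact reach hub
  · rcases u with a | b
    · exact (reach hub).trans (reach (doubleStar_adj_of_mem (p := (a, y))
        (mem_doubleStarCells.2 (.inl ⟨.inr hu, rfl⟩)))).symm
    · exact reach (doubleStar_adj_of_mem (p := (x, b))
        (mem_doubleStarCells.2 (.inr ⟨rfl, hu⟩)))

theorem doubleStar_isTree [Finite α] [Finite β] {S : Finset (α ⊕ β)} {x : α} {y : β}
    (hx : inl x ∉ S) (hy : inr y ∉ S) : (doubleStar S x y).coe.IsTree := by
  refine Subgraph.coe_isTree_iff.2 ⟨doubleStar_connected S x y, ?_⟩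
  rw [doubleStar_edgeSet, Set.ncard_image_of_injective _ cellEdge.injective,
    Set.ncard_coe_finset, card_doubleStarCells hx hy, doubleStar,
    Set.ncard_insert_of_notMem (by simpa using hx), Set.ncard_insert_of_notMem hy,
    Set.ncard_coe_finset]

theorem doubleStar_disjoint {S : Finset (α ⊕ β)} {x x' : α} {y y' : β}
    (hx : inl x ∉ S) (hy : inr y ∉ S) (hxx' : x ≠ x') (hyy' : y ≠ y') :
    (doubleStar S x y).edgeSet ∩ (doubleStar S x' y').edgeSet = ∅ ∧
      (doubleStar S x y).verts ∩ (doubleStar S x' y').verts = ↑S := by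
  refine ⟨?_, ?_⟩
  · rw [doubleStar_edgeSet, doubleStar_edgeSet, ← Set.image_inter cellEdge.injective,
      ← coe_inter, disjoint_iff_inter_eq_empty.1 (disjoint_doubleStarCells hx hy hxx' hyy'),
      coe_empty, Set.image_empty]
  · refine Set.Subset.antisymm ?_ fun u hu => ⟨.inr (.inr hu), .inr (.inr hu)⟩
    rintro u ⟨rfl | rfl | hu, hu'⟩ <;> simp_all [doubleStar]

end DoubleStar

section Counting

variable {P γ : Type*} [Fintype P] [Fintype γ]

theorem card_not_injective_le {ι : Type*} [Fintype ι] [DecidableEq ι] [DecidableEq γ]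
    (h : Fintype.card ι ≤ Fintype.card γ) :
    Fintype.card {g : ι → γ // ¬ Injective g} ≤ Fintype.card γ ^ Fintype.card ι - 1 := by
  obtain ⟨e⟩ := Embedding.nonempty_of_card_le h
  have : 0 < Fintype.card {g : ι → γ // Injective g} :=
    Fintype.card_pos_iff.2 ⟨⟨e, e.injective⟩⟩
  rw [Fintype.card_subtype_compl, Fintype.card_fun]
  omega

open scoped Classical in
theorem card_forall_not_injOn_mul_le {t s : ℕ} (D : Fin t → Finset P) (hD : ∀ j, #(D j) = s)
    (hdisj : Pairwise (Disjoint on D)) (hs : s ≤ Fintype.card γ) :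
    #{M : P → γ | ∀ j, ¬ Set.InjOn M (D j)} * (Fintype.card γ ^ s) ^ t ≤
      (Fintype.card γ ^ s - 1) ^ t * Fintype.card γ ^ Fintype.card P := by
  set U := univ.biUnion D
  have hU : #U = t * s := by
    rw [card_biUnion fun i _ j _ hij => hdisj hij]
    simp [hD]
  let restrict (M : {M : P → γ // ∀ j, ¬ Set.InjOn M (D j)}) :
      ((j : Fin t) → {g : D j → γ // ¬ Injective g}) × (↥Uᶜ → γ) :=
    (fun j => ⟨(fun p => M.1 p), fun hM => M.2 j (Set.injOn_iff_injective.2 hM)⟩,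
      fun p => M.1 p)
  have hrestrict : Injective restrict := by
    rintro ⟨M, _⟩ ⟨M', _⟩ h
    simp only [restrict, Prod.mk.injEq, funext_iff, Subtype.mk.injEq] at h
    ext p
    by_cases hp : p ∈ U
    · obtain ⟨j, -, hj⟩ := mem_biUnion.1 hp
      exact h.1 j ⟨p, hj⟩
    · exact h.2 ⟨p, mem_compl.2 hp⟩
  have hcard := Fintype.card_le_of_injective restrict hrestrict
  rw [Fintype.card_subtype, Fintype.card_prod, Fintype.card_pi, Fintype.card_fun,
    Fintype.card_coe, card_compl, hU] at hcard
  have hfac (j : Fin t) :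
      Fintype.card {g : D j → γ // ¬ Injective g} ≤ Fintype.card γ ^ s - 1 := by
    simpa [hD j] using card_not_injective_le (ι := D j) (γ := γ) (by simpa [hD j] using hs)
  calc _ ≤ (Fintype.card γ ^ s - 1) ^ t * Fintype.card γ ^ (Fintype.card P - t * s) *
        (Fintype.card γ ^ s) ^ t := by
        gcongr
        refine hcard.trans (Nat.mul_le_mul_right _ ?_)
        simpa using prod_le_prod' fun j (_ : j ∈ univ) => hfac j
    _ = _ := by
        rw [mul_assoc, ← pow_mul, mul_comm s, ← pow_add,
          Nat.sub_add_cancel (hU ▸ card_le_univ U)]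

theorem exists_forall_exists_injOn {ι : Type*} [Nonempty γ] {t s : ℕ} (I : Finset ι)
    (D : ι → Fin t → Finset P) (hD : ∀ i ∈ I, ∀ j, #(D i j) = s)
    (hdisj : ∀ i ∈ I, Pairwise (Disjoint on D i)) (hs : s ≤ Fintype.card γ)
    (hI : #I * (Fintype.card γ ^ s - 1) ^ t < (Fintype.card γ ^ s) ^ t) :
    ∃ M : P → γ, ∀ i ∈ I, ∃ j, Set.InjOn M (D i j) := by
  classical
  by_contra! hbad
  set g := Fintype.card γ
  have hcover : (univ : Finset (P → γ)) ⊆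
      I.biUnion fun i => {M | ∀ j, ¬ Set.InjOn M (D i j)} := fun M _ => by
    obtain ⟨i, hi, hM⟩ := hbad M
    exact mem_biUnion.2 ⟨i, hi, mem_filter.2 ⟨mem_univ M, hM⟩⟩
  have hpos : 0 < g ^ Fintype.card P := pow_pos Fintype.card_pos _
  refine lt_irrefl (g ^ Fintype.card P * (g ^ s) ^ t) ?_
  calc g ^ Fintype.card P * (g ^ s) ^ t
      ≤ (∑ i ∈ I, #{M : P → γ | ∀ j, ¬ Set.InjOn M (D i j)}) * (g ^ s) ^ t := by
        gcongr
        simpa [g] using (card_le_card hcover).trans card_biUnion_le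
    _ ≤ ∑ _i ∈ I, (g ^ s - 1) ^ t * g ^ Fintype.card P := by
        rw [sum_mul]
        exact sum_le_sum fun i hi => card_forall_not_injOn_mul_le _ (hD i hi) (hdisj i hi) hs
    _ = #I * (g ^ s - 1) ^ t * g ^ Fintype.card P := by rw [sum_const, smul_eq_mul, mul_assoc]
    _ < (g ^ s) ^ t * g ^ Fintype.card P := Nat.mul_lt_mul_of_pos_right hI hpos
    _ = g ^ Fintype.card P * (g ^ s) ^ t := mul_comm _ _

end Counting

theorem exists_embedding_avoiding {κ α β : Type*} [Fintype κ] [DecidableEq α] [DecidableEq β]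
    {f : κ → α} {g : κ → β} (hf : Injective f) (hg : Injective g) (S : Finset (α ⊕ β)) {t : ℕ}
    (ht : t ≤ Fintype.card κ - #S) :
    ∃ e : Fin t ↪ κ, ∀ j, inl (f (e j)) ∉ S ∧ inr (g (e j)) ∉ S := by
  classical
  have hleft : #{j | inl (f j) ∈ S} ≤ #S.toLeft :=
    card_le_card_of_injOn f (fun j hj => by simpa using hj) hf.injOn
  have hright : #{j | inr (g j) ∈ S} ≤ #S.toRight :=
    card_le_card_of_injOn g (fun j hj => by simpa using hj) hg.injOn
  have hbad : #{j | inl (f j) ∈ S ∨ inr (g j) ∈ S} ≤ #S := by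
    rw [filter_or, ← card_toLeft_add_card_toRight]
    exact (card_union_le _ _).trans (add_le_add hleft hright)
  have hsplit := card_filter_add_card_filter_not (s := univ)
    fun j => inl (f j) ∈ S ∨ inr (g j) ∈ S
  simp only [not_or, card_univ] at hsplit
  obtain ⟨e⟩ := Embedding.nonempty_of_card_le
    (α := Fin t) (β := {j // j ∈ ({j | inl (f j) ∉ S ∧ inr (g j) ∉ S} : Finset κ)})
    (by rw [Fintype.card_fin, Fintype.card_coe]; omega)
  exact ⟨e.trans (Embedding.subtype _), fun j => (mem_filter.1 (e j).2).2⟩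

theorem exists_coloring_hasRainbowSTrees {m n k ℓ q : ℕ} (hqm : ℓ * q ≤ m) (hqn : ℓ * q ≤ n)
    (hI : (m + n).choose k * ℓ * ((k + 1) ^ (k + 1) - 1) ^ (q - k) <
      ((k + 1) ^ (k + 1)) ^ (q - k)) :
    ∃ c : Sym2 (Fin m ⊕ Fin n) → Fin (k + 1),
      HasRainbowSTrees (completeBipartiteGraph (Fin m) (Fin n)) c k ℓ := by
  classical
  -- `xh (i, j)` and `yh (i, j)` are the `j`-th vertices of the `i`-th blocks.
  set xh : Fin ℓ × Fin q ↪ Fin m := finProdFinEquiv.toEmbedding.trans (Fin.castLEEmb hqm)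
  set yh : Fin ℓ × Fin q ↪ Fin n := finProdFinEquiv.toEmbedding.trans (Fin.castLEEmb hqn)
  have hcand (S : {S : Finset (Fin m ⊕ Fin n) // #S = k}) (i : Fin ℓ) :
      ∃ e : Fin (q - k) ↪ Fin q, ∀ j, inl (xh (i, e j)) ∉ S.1 ∧ inr (yh (i, e j)) ∉ S.1 :=
    exists_embedding_avoiding (xh.injective.comp (Prod.mk_right_injective i))
      (yh.injective.comp (Prod.mk_right_injective i)) S.1 (by simp [S.2])
  choose e he using hcand
  let D (Si : {S : Finset (Fin m ⊕ Fin n) // #S = k} × Fin ℓ) (j : Fin (q - k)) :=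
    (doubleStarCells Si.1.1 (xh (Si.2, e Si.1 Si.2 j)) (yh (Si.2, e Si.1 Si.2 j))).map cellEdge
  obtain ⟨c, hc⟩ := exists_forall_exists_injOn (γ := Fin (k + 1)) univ D
    (fun Si _ j => by rw [card_map, card_doubleStarCells (he _ _ j).1 (he _ _ j).2, Si.1.2])
    (fun Si _ j j' hjj' => by
      rw [onFun, disjoint_map]
      exact disjoint_doubleStarCells (he _ _ j).1 (he _ _ j).2
        (fun h => hjj' ((e _ _).injective (Prod.ext_iff.1 (xh.injective h)).2))
        (fun h => hjj' ((e _ _).injective (Prod.ext_iff.1 (yh.injective h)).2)))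
    (by simp)
    (by simpa [Fintype.card_finset_len] using hI)
  refine ⟨c, fun S hS => ?_⟩
  choose j hj using fun i => hc (⟨S, hS⟩, i) (mem_univ _)
  have hout (i : Fin ℓ) := he ⟨S, hS⟩ i (j i)
  refine ⟨fun i => doubleStar S (xh (i, e ⟨S, hS⟩ i (j i))) (yh (i, e ⟨S, hS⟩ i (j i))),
    fun i => ⟨?_, doubleStar_isTree (hout i).1 (hout i).2, ?_⟩,
    fun i i' hii' => doubleStar_disjoint (hout i).1 (hout i).2 ?_ ?_⟩
  · exact fun u hu => .inr (.inr hu)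
  · rw [doubleStar_edgeSet, ← coe_map]
    exact hj i
  · exact fun h => hii' (Prod.ext_iff.1 (xh.injective h)).1
  · exact fun h => hii' (Prod.ext_iff.1 (yh.injective h)).1

section LowerBound

variable {α β : Type*}

theorem exists_monochromatic_biclique [Fintype α] [Fintype β] {γ : Type*} [Fintype γ]
    (c : Sym2 (α ⊕ β) → γ) {r : ℕ} (hα : Fintype.card γ < Fintype.card α)
    (hβ : Fintype.card γ ^ (Fintype.card γ + 1) * r ≤ Fintype.card β) :
    ∃ x₁ x₂ : α, x₁ ≠ x₂ ∧ ∃ b : γ, ∃ Y : Finset β, #Y = r ∧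
      ∀ y ∈ Y, c s(inl x₁, inr y) = b ∧ c s(inl x₂, inr y) = b := by
  classical
  obtain ⟨e⟩ := Embedding.nonempty_of_card_le (α := Fin (Fintype.card γ + 1)) (β := α)
    (by simpa using hα)
  have : Nonempty γ := ⟨c s(inl (e 0), inl (e 0))⟩
  obtain ⟨v, hv⟩ := Fintype.exists_le_card_fiber_of_mul_le_card
    (fun y i => c s(inl (e i), inr y)) (by simpa using hβ)
  obtain ⟨i, i', hii', hv'⟩ := Fintype.exists_ne_map_eq_of_card_lt v (by simp)
  obtain ⟨Y, hY, hYcard⟩ := exists_subset_card_eq hv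
  refine ⟨e i, e i', e.injective.ne hii', v i, Y, hYcard, fun y hy => ?_⟩
  have hy : (fun i => c s(inl (e i), inr y)) = v := (mem_filter.1 (hY hy)).2
  exact ⟨congrFun hy i, (congrFun hy i').trans hv'.symm⟩

variable {T : (completeBipartiteGraph α β).Subgraph}

theorem exists_adj_inr_of_preconnected [Nontrivial T.verts] (hT : T.Preconnected) {a : α}
    (ha : inl a ∈ T.verts) : ∃ y, T.Adj (inl a) (inr y) := by
  obtain ⟨w, hw⟩ := hT.exists_adj_of_nontrivial ⟨inl a, ha⟩
  rcases w with a' | y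
  · simpa using T.adj_sub hw
  · exact ⟨y, hw⟩

theorem exists_adj_inl_of_preconnected [Nontrivial T.verts] (hT : T.Preconnected) {y : β}
    (hy : inr y ∈ T.verts) : ∃ a, T.Adj (inr y) (inl a) := by
  obtain ⟨w, hw⟩ := hT.exists_adj_of_nontrivial ⟨inr y, hy⟩
  rcases w with a | y'
  · exact ⟨a, hw⟩
  · simpa using T.adj_sub hw

theorem IsRainbowSTree.card_add_one_lt_ncard_verts [DecidableEq α] [Finite α] [Finite β]
    {γ : Type*} {c : Sym2 (α ⊕ β) → γ} {x₁ x₂ : α} (hx : x₁ ≠ x₂) {b : γ} {Y : Finset β}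
    (hY : 1 < #Y) (hc : ∀ y ∈ Y, c s(inl x₁, inr y) = b ∧ c s(inl x₂, inr y) = b)
    (hT : IsRainbowSTree (completeBipartiteGraph α β) c ↑(({x₁, x₂} : Finset α).disjSum Y) T) :
    #(({x₁, x₂} : Finset α).disjSum Y) + 1 < T.verts.ncard := by
  set S := ({x₁, x₂} : Finset α).disjSum Y
  obtain ⟨hST, htree, hinj⟩ := hT
  have hcolor {a y} (ha : a = x₁ ∨ a = x₂) (hy : y ∈ Y) : c (cellEdge (a, y)) = b := by
    rcases ha with rfl | rfl
    exacts [(hc y hy).1, (hc y hy).2]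
  have hunique {a a' y y'} (ha : a = x₁ ∨ a = x₂) (ha' : a' = x₁ ∨ a' = x₂) (hy : y ∈ Y)
      (hy' : y' ∈ Y) (h : T.Adj (inl a) (inr y)) (h' : T.Adj (inl a') (inr y')) :
      a = a' ∧ y = y' :=
    Prod.ext_iff.1 <| cellEdge.injective <|
      hinj h h' ((hcolor ha hy).trans (hcolor ha' hy').symm)
  have hpre : T.Preconnected := Subgraph.preconnected_iff.2 htree.connected.preconnected
  have : Nontrivial T.verts := ⟨⟨inl x₁, hST (by simp [S])⟩, ⟨inl x₂, hST (by simp [S])⟩,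
    fun h => hx (inl_injective (congrArg Subtype.val h))⟩
  by_contra! hcard
  -- Either two vertices of `Y` hang off `x₁, x₂`, or `T` has a third left vertex; then all its
  -- right vertices lie in `Y` and `x₁, x₂` hang off them. Both give two edges coloured `b`.
  by_cases hleft : ∀ a, inl a ∈ T.verts → a = x₁ ∨ a = x₂
  · obtain ⟨y, hy, y', hy', hyy'⟩ := one_lt_card.1 hY
    obtain ⟨a, ha⟩ :=
      exists_adj_inl_of_preconnected hpre (hST (by simp [S, hy]) : inr y ∈ T.verts)
    obtain ⟨a', ha'⟩ :=
      exists_adj_inl_of_preconnected hpre (hST (by simp [S, hy']) : inr y' ∈ T.verts)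
    exact hyy' (hunique (hleft a ha.snd_mem) (hleft a' ha'.snd_mem) hy hy' ha.symm ha'.symm).2
  · simp only [not_forall, not_or] at hleft
    obtain ⟨a, ha, ha₁, ha₂⟩ := hleft
    have haS : inl a ∉ (S : Set (α ⊕ β)) := by simp [S, ha₁, ha₂]
    have hverts : insert (inl a) ↑S = T.verts := Set.eq_of_subset_of_ncard_le
      (Set.insert_subset ha hST) (by rwa [Set.ncard_insert_of_notMem haS, Set.ncard_coe_finset])
    have hright {y} (h : inr y ∈ T.verts) : y ∈ Y := by simpa [← hverts, S] using h
    obtain ⟨y, hy⟩ :=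
      exists_adj_inr_of_preconnected hpre (hST (by simp [S]) : inl x₁ ∈ T.verts)
    obtain ⟨y', hy'⟩ :=
      exists_adj_inr_of_preconnected hpre (hST (by simp [S]) : inl x₂ ∈ T.verts)
    exact hx (hunique (.inl rfl) (.inr rfl) (hright hy.snd_mem) (hright hy'.snd_mem) hy hy').1

theorem not_hasRainbowSTrees_of_card_le [Fintype α] [Fintype β] {γ : Type*} [Fintype γ]
    (c : Sym2 (α ⊕ β) → γ) {k ℓ : ℕ} (hk : 4 ≤ k) (hℓ : 1 ≤ ℓ) (hγ : Fintype.card γ ≤ k)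
    (hα : k < Fintype.card α) (hβ : k ^ (k + 1) * (k - 2) ≤ Fintype.card β) :
    ¬ HasRainbowSTrees (completeBipartiteGraph α β) c k ℓ := by
  classical
  intro h
  have hpow : Fintype.card γ ^ (Fintype.card γ + 1) ≤ k ^ (k + 1) :=
    (Nat.pow_le_pow_left hγ _).trans (Nat.pow_le_pow_right (by omega) (by omega))
  obtain ⟨x₁, x₂, hx, b, Y, hY, hc⟩ :=
    exists_monochromatic_biclique c (by omega) ((Nat.mul_le_mul_right _ hpow).trans hβ)
  have hS : #(({x₁, x₂} : Finset α).disjSum Y) = k := by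
    rw [card_disjSum, card_pair hx, hY]
    omega
  obtain ⟨T, hT, -⟩ := h _ hS
  have hlt := (hT ⟨0, hℓ⟩).card_add_one_lt_ncard_verts hx (by omega) hc
  have hle := (hT ⟨0, hℓ⟩).ncard_verts_le
  omega

end LowerBound

section Asymptotics

open Filter

theorem cast_choose_le_of_le_mul_rpow {α C : ℝ} (hC : 0 < C) (k : ℕ) {m n : ℕ} (hn : 1 ≤ n)
    (hnm : n ≤ m) (hmC : (m : ℝ) ≤ C * (n : ℝ) ^ α) :
    ((m + n).choose k : ℝ) ≤ (2 * C) ^ k * (n : ℝ) ^ (⌈α⌉₊ * k) := by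
  have hpow : (n : ℝ) ^ α ≤ (n : ℝ) ^ ⌈α⌉₊ := by
    rw [← Real.rpow_natCast]
    exact Real.rpow_le_rpow_of_exponent_le (by exact_mod_cast hn) (Nat.le_ceil α)
  have hmn : ((m + n : ℕ) : ℝ) ≤ 2 * C * (n : ℝ) ^ ⌈α⌉₊ := by
    have : (n : ℝ) ≤ m := by exact_mod_cast hnm
    push_cast
    nlinarith
  calc ((m + n).choose k : ℝ) ≤ ((m + n : ℕ) : ℝ) ^ k := by exact_mod_cast Nat.choose_le_pow _ _
    _ ≤ (2 * C * (n : ℝ) ^ ⌈α⌉₊) ^ k := by gcongr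
    _ = (2 * C) ^ k * (n : ℝ) ^ (⌈α⌉₊ * k) := by rw [mul_pow, pow_mul]

theorem le_mul_mul_div_sub {n ℓ k : ℕ} (h : k < n / ℓ) : n ≤ ℓ * (k + 2) * (n / ℓ - k) := by
  have hℓ : 0 < ℓ := Nat.pos_of_ne_zero fun h0 => by simp [h0] at h
  have hdiv : n / ℓ + 1 ≤ (k + 2) * (n / ℓ - k) := by
    obtain ⟨t, ht⟩ := Nat.exists_eq_add_of_lt h
    rw [ht, show k + t + 1 - k = t + 1 by omega]
    nlinarith
  calc n ≤ ℓ * (n / ℓ + 1) := (Nat.lt_mul_div_succ n hℓ).le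
    _ ≤ ℓ * ((k + 2) * (n / ℓ - k)) := Nat.mul_le_mul_left _ hdiv
    _ = _ := (mul_assoc _ _ _).symm

theorem eventually_choose_mul_lt (α : ℝ) {C : ℝ} (hC : 0 < C) (k : ℕ) {ℓ A : ℕ} (hℓ : 1 ≤ ℓ)
    (hA : 1 ≤ A) :
    ∀ᶠ n : ℕ in atTop, ∀ m : ℕ, n ≤ m → (m : ℝ) ≤ C * (n : ℝ) ^ α →
      (m + n).choose k * ℓ * (A - 1) ^ (n / ℓ - k) < A ^ (n / ℓ - k) := by
  set K := ⌈α⌉₊ * k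
  set ρ : ℝ := (A - 1 : ℕ) / A
  have hA' : (0 : ℝ) < A := by exact_mod_cast hA
  have hρ : |ρ| < 1 := by
    rw [abs_of_nonneg (by positivity), div_lt_one hA']
    exact_mod_cast Nat.sub_lt hA one_pos
  set D : ℝ := (2 * C) ^ k * (ℓ * (k + 2)) ^ K * ℓ
  have hsmall : ∀ᶠ t : ℕ in atTop, D * ((t : ℝ) ^ K * ρ ^ t) < 1 := by
    have := (tendsto_pow_const_mul_const_pow_of_abs_lt_one K hρ).const_mul D
    rw [mul_zero] at this
    exact this.eventually_lt_const one_pos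
  have hq : Tendsto (fun n : ℕ => n / ℓ) atTop atTop := Nat.tendsto_div_const_atTop (by omega)
  filter_upwards [(tendsto_sub_atTop_nat k).comp hq |>.eventually hsmall,
    hq.eventually_gt_atTop k] with n hn hkn m hnm hmC
  set t := n / ℓ - k
  have hn1 : 1 ≤ n := (Nat.one_le_of_lt hkn).trans (Nat.div_le_self n ℓ)
  have hnt : (n : ℝ) ≤ ℓ * (k + 2) * t := by exact_mod_cast le_mul_mul_div_sub hkn
  have hlt : ((m + n).choose k : ℝ) * ℓ * ρ ^ t < 1 := calc
    _ ≤ (2 * C) ^ k * (n : ℝ) ^ K * ℓ * ρ ^ t := by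
      gcongr
      exact cast_choose_le_of_le_mul_rpow hC k hn1 hnm hmC
    _ ≤ (2 * C) ^ k * (ℓ * (k + 2) * t) ^ K * ℓ * ρ ^ t := by gcongr
    _ = D * ((t : ℝ) ^ K * ρ ^ t) := by simp only [D, mul_pow]; ring
    _ < 1 := hn
  rw [div_pow, mul_div_assoc', div_lt_one (by positivity)] at hlt
  exact_mod_cast hlt

end Asymptotics

theorem rx_Kmn_eq_succ_general (α : ℝ) (C : ℝ) (hC : 0 < C)
    (k ℓ : ℕ) (hk : 4 ≤ k) (hℓ : 1 ≤ ℓ) :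
    ∃ N : ℕ, 0 < N ∧ ∀ m n : ℕ, N ≤ n → n ≤ m → (m : ℝ) ≤ C * (n : ℝ) ^ α →
      rainbowIndex (completeBipartiteGraph (Fin m) (Fin n)) k ℓ = k + 1 := by
  obtain ⟨N, hN⟩ := Filter.eventually_atTop.1 <|
    (Filter.eventually_gt_atTop 0).and <|
    (Filter.eventually_ge_atTop (k ^ (k + 1) * (k - 2))).and <|
    (Filter.eventually_gt_atTop k).and <|
    eventually_choose_mul_lt α hC k hℓ (Nat.one_le_pow (k + 1) (k + 1) k.succ_pos)
  refine ⟨N, (hN N le_rfl).1, fun m n hNn hnm hmC => ?_⟩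
  obtain ⟨-, hn, hkn, hI⟩ := hN n hNn
  obtain ⟨c, hc⟩ := exists_coloring_hasRainbowSTrees ((Nat.mul_div_le n ℓ).trans hnm)
    (Nat.mul_div_le n ℓ) (hI m hnm hmC)
  refine rainbowIndex_eq_of ⟨c, hc⟩ fun t ht c' => ?_
  exact not_hasRainbowSTrees_of_card_le c' hk hℓ (by simpa using Nat.le_of_lt_succ ht)
    (by simpa using hkn.trans_le hnm) (by simpa using hn)

theorem rx_Kmn_eq_succ (α : ℝ) (hα : 1 ≤ α) (C : ℝ) (hC : 0 < C)
    (k ℓ : ℕ) (hk : 4 ≤ k) (hℓ : 1 ≤ ℓ) :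
    ∃ N : ℕ, 0 < N ∧ ∀ m n : ℕ, N ≤ n → n ≤ m → (m : ℝ) ≤ C * (n : ℝ) ^ α →
      rainbowIndex (completeBipartiteGraph (Fin m) (Fin n)) k ℓ = k + 1 :=
  rx_Kmn_eq_succ_general α C hC k ℓ hk hℓ
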